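/- Let $A = (a_{ij})$ be an $m_1 \times m_2$ nonnegative matrix whose every column is a probability vector, let $b \in \mathbb{R}^{m_1}$ and $x^* \in \mathbb{R}^{m_2}$ be positive probability vectors with $Ax^* = b$, and let $x_0 \in \mathbb{R}^{m_2}$ be a positive probability vector. Define $b_n = Ax_n$ and $x_{n+1,j} = x_{n,j} \sum_{i=1}^{m_1} a_{ij} b_i/b_{n,i}$. Then for every $\epsilon > 0$ there exists a positive integer $N \le D(x^*, x_1)/\epsilon + 1$ such that $D(b, b_N) \le \epsilon$. -/
import Mathlib

open Finset

/-- Kullback–Leibler divergence between nonnegative vectors (real-valued,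
with the convention `0 * log (0 / v) = 0`, which holds automatically in Lean). -/
noncomputable def KL {m : ℕ} (u v : Fin m → ℝ) : ℝ :=
  ∑ i, u i * Real.log (u i / v i)

lemma KL_nonneg' {m : ℕ} (u v : Fin m → ℝ) (hu : ∀ i, 0 < u i) (hv : ∀ i, 0 < v i)
    (h : ∑ i, u i = ∑ i, v i) : 0 ≤ KL u v := by
  have key : ∀ i, u i - v i ≤ u i * Real.log (u i / v i) := by
    intro i
    have h1 : Real.log (v i / u i) ≤ v i / u i - 1 :=
      Real.log_le_sub_one_of_pos (div_pos (hv i) (hu i))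
    have h2 : Real.log (u i / v i) = - Real.log (v i / u i) := by
      rw [Real.log_div (hu i).ne' (hv i).ne', Real.log_div (hv i).ne' (hu i).ne']; ring
    have h3 : u i * Real.log (v i / u i) ≤ u i * (v i / u i - 1) :=
      mul_le_mul_of_nonneg_left h1 (hu i).le
    have h4 : u i * (v i / u i - 1) = v i - u i := by field_simp [(hu i).ne']
    rw [h2]; nlinarith
  have : ∑ i, (u i - v i) ≤ KL u v := Finset.sum_le_sum (fun i _ => key i)
  rw [Finset.sum_sub_distrib, h] at this
  simpa using this

/-- For every `ε > 0` there is `N ≤ D(x*, x₁)/ε + 1` with `D(b, b_N) ≤ ε`. -/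
theorem em_iteration_iteration_bound {m₁ m₂ : ℕ}
    (A : Matrix (Fin m₁) (Fin m₂) ℝ) (hA : ∀ i j, 0 ≤ A i j)
    (hcol : ∀ j, ∑ i, A i j = 1)
    (b : Fin m₁ → ℝ) (hb : ∀ i, 0 < b i) (hbsum : ∑ i, b i = 1)
    (xstar : Fin m₂ → ℝ) (hxs : ∀ j, 0 < xstar j) (hxssum : ∑ j, xstar j = 1)
    (hsol : A.mulVec xstar = b)
    (x : ℕ → Fin m₂ → ℝ) (hx0 : ∀ j, 0 < x 0 j) (hx0sum : ∑ j, x 0 j = 1)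
    (hrec : ∀ n j, x (n + 1) j = x n j * ∑ i, A i j * (b i / A.mulVec (x n) i)) :
    ∀ ε : ℝ, 0 < ε → ∃ N : ℕ, 0 < N ∧ (N : ℝ) ≤ KL xstar (x 1) / ε + 1 ∧
      KL b (A.mulVec (x N)) ≤ ε := by
  have hmv : ∀ (y : Fin m₂ → ℝ) i, A.mulVec y i = ∑ j, A i j * y j := by
    intro y i; simp [Matrix.mulVec, dotProduct]
  have hbv : ∀ i, b i = ∑ j, A i j * xstar j := by
    intro i; rw [← hsol, hmv]
  -- positivity of A.mulVec y for positive y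
  have hmvpos : ∀ (y : Fin m₂ → ℝ), (∀ j, 0 < y j) → ∀ i, 0 < A.mulVec y i := by
    intro y hy i
    rw [hmv]
    by_contra h
    push_neg at h
    have hnn : ∀ j ∈ Finset.univ, 0 ≤ A i j * y j :=
      fun j _ => mul_nonneg (hA i j) (hy j).le
    have hz : ∑ j, A i j * y j = 0 := le_antisymm h (Finset.sum_nonneg hnn)
    have hAz : ∀ j, A i j = 0 := by
      intro j
      have hj := (Finset.sum_eq_zero_iff_of_nonneg hnn).mp hz j (Finset.mem_univ j)
      rcases mul_eq_zero.mp hj with h' | h'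
      · exact h'
      · exact absurd h' (hy j).ne'
    have : b i = 0 := by rw [hbv i]; simp [hAz]
    exact (hb i).ne' this
  -- positivity of iterates
  have hps : ∀ n j, 0 < x n j := by
    intro n
    induction n with
    | zero => exact hx0
    | succ n ih =>
      intro j
      rw [hrec]
      refine mul_pos (ih j) ?_
      have hbn : ∀ i, 0 < A.mulVec (x n) i := hmvpos _ ih
      have hex : ∃ i, 0 < A i j := by
        by_contra h
        push_neg at h
        have hz : ∀ i, A i j = 0 := fun i => le_antisymm (h i) (hA i j)
        have := hcol j
        simp [hz] at this
      obtain ⟨i₀, hi₀⟩ := hex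
      refine Finset.sum_pos' (fun i _ => mul_nonneg (hA i j) (div_nonneg (hb i).le (hbn i).le))
        ⟨i₀, Finset.mem_univ i₀, mul_pos hi₀ (div_pos (hb i₀) (hbn i₀))⟩
  -- iterates are probability vectors
  have hsum : ∀ n, ∑ j, x n j = 1 := by
    intro n
    induction n with
    | zero => exact hx0sum
    | succ n ih =>
      have hbn : ∀ i, 0 < A.mulVec (x n) i := hmvpos _ (hps n)
      calc ∑ j, x (n + 1) j
          = ∑ j, ∑ i, (b i / A.mulVec (x n) i) * (A i j * x n j) := by
            refine Finset.sum_congr rfl fun j _ => ?_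
            rw [hrec, Finset.mul_sum]
            exact Finset.sum_congr rfl fun i _ => by ring
        _ = ∑ i, (b i / A.mulVec (x n) i) * ∑ j, A i j * x n j := by
            rw [Finset.sum_comm]
            exact Finset.sum_congr rfl fun i _ => (Finset.mul_sum _ _ _).symm
        _ = ∑ i, b i := by
            refine Finset.sum_congr rfl fun i _ => ?_
            rw [← hmv, div_mul_cancel₀ _ (hbn i).ne']
        _ = 1 := hbsum
  have hbnsum : ∀ n, ∑ i, A.mulVec (x n) i = 1 := by
    intro n
    calc ∑ i, A.mulVec (x n) i = ∑ i, ∑ j, A i j * x n j :=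
          Finset.sum_congr rfl fun i _ => hmv _ i
      _ = ∑ j, (∑ i, A i j) * x n j := by
          rw [Finset.sum_comm]
          exact Finset.sum_congr rfl fun j _ => (Finset.sum_mul _ _ _).symm
      _ = ∑ j, x n j := by simp [hcol]
      _ = 1 := hsum n
  -- the key decrement inequality
  have key : ∀ n, KL b (A.mulVec (x n)) ≤ KL xstar (x n) - KL xstar (x (n + 1)) := by
    intro n
    set bn : Fin m₁ → ℝ := A.mulVec (x n) with hbn_def
    have hbn : ∀ i, 0 < bn i := hmvpos _ (hps n)
    have hxn : ∀ j, 0 < x n j := hps n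
    have hxn1 : ∀ j, 0 < x (n + 1) j := hps (n + 1)
    have hR : KL xstar (x n) - KL xstar (x (n + 1))
        = ∑ j, xstar j * Real.log (x (n + 1) j / x n j) := by
      unfold KL
      rw [← Finset.sum_sub_distrib]
      refine Finset.sum_congr rfl fun j _ => ?_
      rw [← mul_sub]
      congr 1
      rw [Real.log_div (hxs j).ne' (hxn j).ne', Real.log_div (hxs j).ne' (hxn1 j).ne',
        Real.log_div (hxn1 j).ne' (hxn j).ne']
      ring
    have hratio : ∀ j, x (n + 1) j / x n j = ∑ i, A i j * (b i / bn i) := by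
      intro j
      rw [hbn_def, hrec, mul_div_cancel_left₀ _ (hxn j).ne']
    have jensen : ∀ j, ∑ i, A i j * Real.log (b i / bn i)
        ≤ Real.log (∑ i, A i j * (b i / bn i)) := by
      intro j
      have hconc : ConcaveOn ℝ (Set.Ioi 0) Real.log := strictConcaveOn_log_Ioi.concaveOn
      have := hconc.le_map_sum (t := Finset.univ) (w := fun i => A i j)
        (p := fun i => b i / bn i) (fun i _ => hA i j) (hcol j)
        (fun i _ => Set.mem_Ioi.mpr (div_pos (hb i) (hbn i)))
      simpa using this
    have hKLb : KL b bn = ∑ j, xstar j * ∑ i, A i j * Real.log (b i / bn i) := by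
      calc KL b bn = ∑ i, (∑ j, A i j * xstar j) * Real.log (b i / bn i) := by
            unfold KL
            refine Finset.sum_congr rfl fun i _ => ?_
            rw [← hbv i]
        _ = ∑ i, ∑ j, xstar j * (A i j * Real.log (b i / bn i)) := by
            refine Finset.sum_congr rfl fun i _ => ?_
            rw [Finset.sum_mul]
            exact Finset.sum_congr rfl fun j _ => by ring
        _ = ∑ j, xstar j * ∑ i, A i j * Real.log (b i / bn i) := by
            rw [Finset.sum_comm]
            exact Finset.sum_congr rfl fun j _ => (Finset.mul_sum _ _ _).symm
    rw [hR, hKLb]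
    refine Finset.sum_le_sum fun j _ => ?_
    rw [hratio j]
    exact mul_le_mul_of_nonneg_left (jensen j) (hxs j).le
  -- nonnegativity facts
  have hKLnn : ∀ n, 0 ≤ KL xstar (x n) :=
    fun n => KL_nonneg' _ _ hxs (hps n) (by rw [hxssum, hsum n])
  set K : ℝ := KL xstar (x 1) with hK_def
  have hK0 : 0 ≤ K := hKLnn 1
  -- telescoping
  have tel : ∀ N, ∑ n ∈ Finset.range N, KL b (A.mulVec (x (n + 1)))
      ≤ K - KL xstar (x (N + 1)) := by
    intro N
    induction N with
    | zero => simp [hK_def]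
    | succ N ih =>
      rw [Finset.sum_range_succ]
      have := key (N + 1)
      linarith
  intro ε hε
  by_contra hcon
  push_neg at hcon
  set N₀ : ℕ := ⌊K / ε⌋₊ + 1 with hN₀
  have hfloor : (⌊K / ε⌋₊ : ℝ) ≤ K / ε := Nat.floor_le (div_nonneg hK0 hε.le)
  have hN₀le : (N₀ : ℝ) ≤ K / ε + 1 := by
    push_cast [hN₀]
    linarith
  have hN₀gt : K / ε < (N₀ : ℝ) := by
    push_cast [hN₀]
    exact Nat.lt_floor_add_one _
  have hbig : ∀ n ∈ Finset.range N₀, ε < KL b (A.mulVec (x (n + 1))) := by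
    intro n hn
    refine hcon (n + 1) (Nat.succ_pos n) ?_
    have : (n : ℝ) + 1 ≤ (N₀ : ℝ) := by
      exact_mod_cast Nat.succ_le_of_lt (Finset.mem_range.mp hn)
    push_cast
    linarith
  have hlt : (N₀ : ℝ) * ε < ∑ n ∈ Finset.range N₀, KL b (A.mulVec (x (n + 1))) := by
    have hne : (Finset.range N₀).Nonempty := ⟨0, Finset.mem_range.mpr (Nat.succ_pos _)⟩
    have := Finset.sum_lt_sum_of_nonempty hne hbig
    simpa [mul_comm] using this
  have hK_lt : K < (N₀ : ℝ) * ε := by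
    rw [div_lt_iff₀ hε] at hN₀gt
    linarith
  have hle : ∑ n ∈ Finset.range N₀, KL b (A.mulVec (x (n + 1))) ≤ K := by
    have := tel N₀
    have := hKLnn (N₀ + 1)
    linarith
  linarith
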